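/- arXiv:1507.02890 — 2 statements merged into one kernel-verified Lean document; each statement's English description precedes it below -/
import Mathlib

section
/- Let G be a good maximal parallel block of a finite N-free poset P. Then the set of witnesses of G equals W⁻(G), or W⁺(G), or W⁻(G) ∪ W⁺(G), where W⁻(G) is the set of predecessors of the minimal elements of G and W⁺(G) is the set of successors of the maximal elements of G. -/
/-- A partial order is N-free if it contains no four elements whose induced order
relations are exactly `x1 < x2`, `x3 < x2`, `x3 < x4`. -/
def NFree (α : Type*) [PartialOrder α] : Prop :=
  ¬ ∃ x1 x2 x3 x4 : α,
      x1 < x2 ∧ x3 < x2 ∧ x3 < x4 ∧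
      x1 ≠ x3 ∧ x1 ≠ x4 ∧ x2 ≠ x4 ∧
      ¬ (x1 < x3 ∨ x3 < x1) ∧ ¬ (x1 < x4 ∨ x4 < x1) ∧ ¬ (x2 < x4 ∨ x4 < x2)

variable {α : Type*} [PartialOrder α]

/-- Two elements are comparable. -/
def Comp (x y : α) : Prop := x < y ∨ y < x

/-- A block: a nonempty subset closed under intermediate elements. -/
def IsBlock (B : Set α) : Prop :=
  B.Nonempty ∧ ∀ b ∈ B, ∀ b' ∈ B, b < b' → ∀ p, b ≤ p → p ≤ b' → p ∈ B

/-- A subset `G` of `X` is good (in `X`) if every element of `X` comparable to some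
element of `G` and incomparable to another element of `G` belongs to `G`. -/
def IsGoodIn (X G : Set α) : Prop :=
  ∀ p ∈ X, (∃ g ∈ G, Comp p g) → (∃ g' ∈ G, ¬ Comp p g') → p ∈ G

/-- `R` decomposes as a parallel product of two nonempty, elementwise
incomparable (hence disjoint) parts. -/
def IsParallel (R : Set α) : Prop :=
  ∃ P1 P2 : Set α, P1.Nonempty ∧ P2.Nonempty ∧ R = P1 ∪ P2 ∧
    ∀ x ∈ P1, ∀ y ∈ P2, x ≠ y ∧ ¬ Comp x y

/-- A good maximal parallel block of `X`: a good block of `X` contained in `X`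
admitting a nontrivial parallel decomposition, and maximal for parallel
extension: no good block of `X` equals `R ∥ T` with `T` nonempty. -/
def GMPB (X R : Set α) : Prop :=
  R ⊆ X ∧ IsBlock R ∧ IsGoodIn X R ∧ IsParallel R ∧
    ¬ ∃ R' : Set α, R' ⊆ X ∧ IsBlock R' ∧ IsGoodIn X R' ∧
      ∃ T : Set α, T.Nonempty ∧ R' = R ∪ T ∧ ∀ x ∈ R, ∀ y ∈ T, x ≠ y ∧ ¬ Comp x y

/-- The minimal elements of `G`. -/
def minOf (G : Set α) : Set α := {g ∈ G | ∀ g' ∈ G, ¬ g' < g}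

/-- The maximal elements of `G`. -/
def maxOf (G : Set α) : Set α := {g ∈ G | ∀ g' ∈ G, ¬ g < g'}

variable (G : Set α)

/-- The set of elements strictly below all of `G`. -/
def lowerOf : Set α := {p | ∀ g ∈ G, p < g}

/-- The set of elements strictly above all of `G`. -/
def upperOf : Set α := {p | ∀ g ∈ G, g < p}

/-- A left witness of `G`: a maximal element of `{p : p < G}` whose set of
successors (covers) is exactly the set of minimal elements of `G`. -/
def IsLeftWitness (x : α) : Prop :=
  x ∈ lowerOf G ∧ (∀ y ∈ lowerOf G, ¬ x < y) ∧ {s | x ⋖ s} = minOf G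

/-- A right witness of `G`: a minimal element of `{p : G < p}` whose set of
predecessors is exactly the set of maximal elements of `G`. -/
def IsRightWitness (x : α) : Prop :=
  x ∈ upperOf G ∧ (∀ y ∈ upperOf G, ¬ y < x) ∧ {p | p ⋖ x} = maxOf G

/-- The set of witnesses of `G`. -/
def witnesses : Set α := {x | IsLeftWitness G x} ∪ {x | IsRightWitness G x}

/-- `W⁻(G)`: the predecessors of the minimal elements of `G`. -/
def Wminus : Set α := {x | ∃ m ∈ minOf G, x ⋖ m}

/-- `W⁺(G)`: the successors of the maximal elements of `G`. -/
def Wplus : Set α := {x | ∃ m ∈ maxOf G, m ⋖ x}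

/-!
Every element of `P` lies in `G`, strictly below all of `G`, strictly above all of `G`, or is
incomparable to all of `G` (`parallelOf G`); this is where goodness and convexity of `G` enter.
`W⁻(G)` is then the set of maximal elements of the part below `G`, and `x ∈ W⁻(G)` is a left
witness exactly when no cover of `x` is parallel to `G`. If some `x ∈ W⁻(G)` is a left witness and
`x' ∈ W⁻(G)` has a parallel cover `s`, then `x < m > x' < s` (with `m ∈ min G`) is an `N`; so the
left witnesses are `∅` or `W⁻(G)`, and dually the right witnesses are `∅` or `W⁺(G)`.

It remains to see that `W⁻(G)` and `W⁺(G)` cannot both be nonempty without any witness. Then some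
`x ∈ W⁻(G)` and `y ∈ W⁺(G)` have parallel covers `x ⋖ s` and `t ⋖ y`. Maximality of `G` forbids
parallel elements strictly between `x` and `y`, since those could be added to `G` in parallel while
keeping a good block; so `s ≮ y` and `x ≮ t`, and then `g, y, t, s` or `t, y, x, s` form an `N`.
-/

open Set OrderDual

def parallelOf (G : Set α) : Set α := {p | ∀ g ∈ G, IncompRel (· ≤ ·) p g}

lemma comp_comm {a b : α} : Comp a b ↔ Comp b a := or_comm

lemma IncompRel.not_comp {a b : α} (h : IncompRel (· ≤ ·) a b) : ¬ Comp a b := by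
  rintro (hab | hba)
  exacts [h.1 hab.le, h.2 hba.le]

lemma incompRel_of_not_comp {a b : α} (h : ¬ Comp a b) (hne : a ≠ b) : IncompRel (· ≤ ·) a b :=
  ⟨fun hab => h (Or.inl (hab.lt_of_ne hne)), fun hba => h (Or.inr (hba.lt_of_ne hne.symm))⟩

lemma NFree.elim (hN : NFree α) {a b c d : α} (hab : a < b) (hcb : c < b) (hcd : c < d)
    (hac : IncompRel (· ≤ ·) a c) (had : IncompRel (· ≤ ·) a d) (hbd : IncompRel (· ≤ ·) b d) :
    False :=
  hN ⟨a, b, c, d, hab, hcb, hcd, hac.ne, had.ne, hbd.ne, hac.not_comp, had.not_comp, hbd.not_comp⟩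

lemma NFree.dual (hN : NFree α) : NFree αᵒᵈ := by
  rintro ⟨a, b, c, d, hab, hcb, hcd, hac, had, hbd, iac, iad, ibd⟩
  exact hN ⟨ofDual d, ofDual c, ofDual b, ofDual a, hcd, hcb, hab, hbd.symm, had.symm, hac.symm,
    ibd, iad, iac⟩

lemma IsBlock.dual {B : Set α} (h : IsBlock B) : IsBlock (ofDual ⁻¹' B) :=
  ⟨h.1, fun b hb b' hb' hlt p hbp hpb' => h.2 b' hb' b hb hlt p hpb' hbp⟩

lemma IsGoodIn.dual {X B : Set α} (h : IsGoodIn X B) : IsGoodIn (ofDual ⁻¹' X) (ofDual ⁻¹' B) :=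
  fun p hp ⟨g, hg, hc⟩ ⟨g', hg', hnc⟩ =>
    h p hp ⟨g, hg, comp_comm.1 hc⟩ ⟨g', hg', mt comp_comm.1 hnc⟩

lemma GMPB.isBlock {X G : Set α} (h : GMPB X G) : IsBlock G := h.2.1

lemma GMPB.isGoodIn {X G : Set α} (h : GMPB X G) : IsGoodIn X G := h.2.2.1

section Decomposition

variable {G : Set α} {p x x' m s : α}

lemma minOf_nonempty [WellFoundedLT α] (hG : G.Nonempty) : (minOf G).Nonempty :=
  let ⟨m, hm⟩ := exists_minimal_of_wellFoundedLT (· ∈ G) hG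
  ⟨m, hm.prop, fun _ hg => hm.not_lt hg⟩

lemma IsBlock.mem_or_lower_or_upper_or_parallel (hB : IsBlock G) (hgood : IsGoodIn univ G)
    (p : α) : p ∈ G ∨ p ∈ lowerOf G ∨ p ∈ upperOf G ∨ p ∈ parallelOf G := by
  by_cases hpG : p ∈ G
  · exact Or.inl hpG
  by_cases hpC : p ∈ parallelOf G
  · exact Or.inr (Or.inr (Or.inr hpC))
  obtain ⟨g₀, hg₀, hinc⟩ : ∃ g ∈ G, ¬ IncompRel (· ≤ ·) p g := by simpa [parallelOf] using hpC
  have hcomp₀ : Comp p g₀ :=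
    by_contra fun h => hinc (incompRel_of_not_comp h fun hpg => hpG (hpg ▸ hg₀))
  have hcomp : ∀ g ∈ G, Comp p g := fun g hg =>
    by_contra fun h => hpG (hgood p trivial ⟨g₀, hg₀, hcomp₀⟩ ⟨g, hg, h⟩)
  rcases hcomp₀ with hlt | hgt
  · refine Or.inr (Or.inl fun g hg => (hcomp g hg).resolve_right fun hgp => ?_)
    exact hpG (hB.2 g hg g₀ hg₀ (hgp.trans hlt) p hgp.le hlt.le)
  · refine Or.inr (Or.inr (Or.inl fun g hg => (hcomp g hg).resolve_left fun hpg => ?_))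
    exact hpG (hB.2 g₀ hg₀ g hg (hgt.trans hpg) p hgt.le hpg.le)

lemma IsBlock.mem_lowerOf_of_lt_minOf (hB : IsBlock G) (hgood : IsGoodIn univ G)
    (hm : m ∈ minOf G) (hp : p < m) : p ∈ lowerOf G := by
  rcases hB.mem_or_lower_or_upper_or_parallel hgood p with hpG | hpL | hpU | hpC
  · exact absurd hp (hm.2 p hpG)
  · exact hpL
  · exact absurd (hpU m hm.1) hp.not_gt
  · exact absurd hp.le (hpC m hm.1).1

lemma IsBlock.mem_lowerOf_of_mem_Wminus (hB : IsBlock G) (hgood : IsGoodIn univ G)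
    (hx : x ∈ Wminus G) : x ∈ lowerOf G :=
  let ⟨_, hm, hxm⟩ := hx
  hB.mem_lowerOf_of_lt_minOf hgood hm hxm.lt

lemma not_lt_of_mem_Wminus (hx : x ∈ Wminus G) (hp : p ∈ lowerOf G) : ¬ x < p :=
  let ⟨m, hm, hxm⟩ := hx
  fun hxp => hxm.2 hxp (hp m hm.1)

lemma IsBlock.covBy_of_mem_Wminus (hB : IsBlock G) (hgood : IsGoodIn univ G)
    (hx : x ∈ Wminus G) (hm : m ∈ minOf G) : x ⋖ m :=
  ⟨hB.mem_lowerOf_of_mem_Wminus hgood hx m hm.1, fun _ hxz hzm =>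
    not_lt_of_mem_Wminus hx (hB.mem_lowerOf_of_lt_minOf hgood hm hzm) hxz⟩

lemma IsBlock.mem_minOf_or_parallelOf_of_covBy (hB : IsBlock G) (hgood : IsGoodIn univ G)
    (hx : x ∈ Wminus G) (hs : x ⋖ s) : s ∈ minOf G ∨ s ∈ parallelOf G := by
  have hxL := hB.mem_lowerOf_of_mem_Wminus hgood hx
  rcases hB.mem_or_lower_or_upper_or_parallel hgood s with hsG | hsL | hsU | hsC
  · exact Or.inl ⟨hsG, fun g hg hgs => hs.2 (hxL g hg) hgs⟩
  · exact absurd hs.lt (not_lt_of_mem_Wminus hx hsL)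
  · obtain ⟨g, hg⟩ := hB.1
    exact absurd (hsU g hg) (hs.2 (hxL g hg))
  · exact Or.inr hsC

lemma IsBlock.isLeftWitness_iff [WellFoundedLT α] (hB : IsBlock G) (hgood : IsGoodIn univ G) :
    IsLeftWitness G x ↔ x ∈ Wminus G ∧ ∀ s, x ⋖ s → s ∉ parallelOf G := by
  constructor
  · rintro ⟨-, -, hcov⟩
    obtain ⟨m, hm⟩ := minOf_nonempty hB.1
    refine ⟨⟨m, hm, hcov.symm.subset hm⟩, fun s hs hsC => ?_⟩
    exact (hsC s (hcov.subset hs).1).1 le_rfl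
  · rintro ⟨hx, hpar⟩
    refine ⟨hB.mem_lowerOf_of_mem_Wminus hgood hx, fun p hp => not_lt_of_mem_Wminus hx hp,
      Subset.antisymm (fun s hs => ?_) fun m hm => hB.covBy_of_mem_Wminus hgood hx hm⟩
    exact (hB.mem_minOf_or_parallelOf_of_covBy hgood hx hs).resolve_right (hpar s hs)

lemma IsBlock.isLeftWitness_of_mem_Wminus [WellFoundedLT α] (hN : NFree α) (hB : IsBlock G)
    (hgood : IsGoodIn univ G) (hw : IsLeftWitness G x) (hx' : x' ∈ Wminus G) :
    IsLeftWitness G x' := by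
  rw [hB.isLeftWitness_iff hgood] at hw ⊢
  obtain ⟨hx, hxpar⟩ := hw
  refine ⟨hx', fun s hs hsC => ?_⟩
  obtain ⟨m, hm, -⟩ := id hx
  have hxL := hB.mem_lowerOf_of_mem_Wminus hgood hx
  have hx'L := hB.mem_lowerOf_of_mem_Wminus hgood hx'
  have hxx' : IncompRel (· ≤ ·) x x' := by
    refine ⟨fun hle => ?_, fun hle => ?_⟩
    · rcases hle.eq_or_lt with rfl | hlt
      exacts [hxpar s hs hsC, not_lt_of_mem_Wminus hx hx'L hlt]
    · rcases hle.eq_or_lt with rfl | hlt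
      exacts [hxpar s hs hsC, not_lt_of_mem_Wminus hx' hxL hlt]
  have hxs : IncompRel (· ≤ ·) x s := by
    refine ⟨fun hle => ?_, fun hle => (hsC m hm.1).1 (hle.trans (hxL m hm.1).le)⟩
    rcases hle.eq_or_lt with rfl | hlt
    · exact (hsC m hm.1).1 (hxL m hm.1).le
    -- the cover of `x` below `s` would be a minimal element of `G` below `s`
    obtain ⟨z, hxz, hzs⟩ := exists_covBy_le_of_lt hlt
    have hz := (hB.mem_minOf_or_parallelOf_of_covBy hgood hx hxz).resolve_right (hxpar z hxz)
    exact (hsC z hz.1).2 hzs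
  exact hN.elim (hxL m hm.1) (hx'L m hm.1) hs.lt hxx' hxs (hsC m hm.1).symm

lemma IsBlock.setOf_isLeftWitness_eq [WellFoundedLT α] (hN : NFree α) (hB : IsBlock G)
    (hgood : IsGoodIn univ G) :
    {x | IsLeftWitness G x} = ∅ ∨ {x | IsLeftWitness G x} = Wminus G := by
  rcases eq_empty_or_nonempty {x | IsLeftWitness G x} with h | ⟨x, hx⟩
  · exact Or.inl h
  · exact Or.inr <| Subset.antisymm (fun _ hx' => ((hB.isLeftWitness_iff hgood).1 hx').1)
      fun _ hx' => hB.isLeftWitness_of_mem_Wminus hN hgood hx hx'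

end Decomposition

section Duality

variable {G : Set α} {y : α}

lemma parallelOf_dual : parallelOf (ofDual ⁻¹' G) = ofDual ⁻¹' parallelOf G :=
  Set.ext fun _ => forall₂_congr fun _ _ => incompRel_comm

lemma Wminus_dual : Wminus (ofDual ⁻¹' G) = ofDual ⁻¹' Wplus G :=
  Set.ext fun _ => exists_congr fun _ => and_congr_right' ofDual_covBy_ofDual_iff.symm

lemma isLeftWitness_dual : IsLeftWitness (ofDual ⁻¹' G) (toDual y) ↔ IsRightWitness G y := by
  have : {s | toDual y ⋖ s} = ofDual ⁻¹' {p | p ⋖ y} := Set.ext fun _ => toDual_covBy_toDual_iff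
  rw [IsLeftWitness, this]
  rfl

lemma IsBlock.mem_upperOf_of_mem_Wplus (hB : IsBlock G) (hgood : IsGoodIn univ G)
    (hy : y ∈ Wplus G) : y ∈ upperOf G :=
  hB.dual.mem_lowerOf_of_mem_Wminus hgood.dual (x := toDual y) (by rwa [Wminus_dual])

lemma IsBlock.isRightWitness_iff [WellFoundedGT α] (hB : IsBlock G) (hgood : IsGoodIn univ G) :
    IsRightWitness G y ↔ y ∈ Wplus G ∧ ∀ t, t ⋖ y → t ∉ parallelOf G := by
  rw [← isLeftWitness_dual, hB.dual.isLeftWitness_iff hgood.dual, Wminus_dual, parallelOf_dual]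
  exact and_congr Iff.rfl (toDual.forall_congr fun {_} => imp_congr_left toDual_covBy_toDual_iff)

lemma IsBlock.setOf_isRightWitness_eq [WellFoundedGT α] (hN : NFree α) (hB : IsBlock G)
    (hgood : IsGoodIn univ G) :
    {y | IsRightWitness G y} = ∅ ∨ {y | IsRightWitness G y} = Wplus G := by
  have h := hB.dual.setOf_isLeftWitness_eq hN.dual hgood.dual
  rwa [Wminus_dual, show {x | IsLeftWitness (ofDual ⁻¹' G) x} = ofDual ⁻¹' {y | IsRightWitness G y}
    from Set.ext fun _ => isLeftWitness_dual] at h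

end Duality

section Extension

variable {G : Set α} {x y p u v : α}

lemma ordConnected_parallelOf (hB : IsBlock G) (hgood : IsGoodIn univ G) :
    (parallelOf G).OrdConnected := by
  refine ⟨fun a ha b hb p ⟨hap, hpb⟩ => ?_⟩
  obtain ⟨g, hg⟩ := hB.1
  rcases hB.mem_or_lower_or_upper_or_parallel hgood p with hpG | hpL | hpU | hpC
  · exact absurd hap (ha p hpG).1
  · exact absurd (hap.trans (hpL g hg).le) (ha g hg).1
  · exact absurd ((hpU g hg).le.trans hpb) (hb g hg).2
  · exact hpC

lemma IsBlock.union_of_subset_parallelOf (hB : IsBlock G) {T : Set α} (hT : T ⊆ parallelOf G)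
    (hT' : T.OrdConnected) : IsBlock (G ∪ T) := by
  refine ⟨hB.1.mono subset_union_left, ?_⟩
  rintro b (hb | hb) b' (hb' | hb') hlt p hbp hpb'
  · exact Or.inl (hB.2 b hb b' hb' hlt p hbp hpb')
  · exact absurd hlt.le (hT hb' b hb).2
  · exact absurd hlt.le (hT hb b' hb').1
  · exact Or.inr (hT'.out hb hb' ⟨hbp, hpb'⟩)

lemma IsBlock.mem_union_of_lt_of_not_comp (hN : NFree α) (hB : IsBlock G)
    (hgood : IsGoodIn univ G) (hx : x ∈ Wminus G) (hu : u ∈ G ∪ parallelOf G ∩ Ioo x y)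
    (hpu : p < u) (hv : v ∈ G ∪ parallelOf G ∩ Ioo x y) (hpv : ¬ Comp p v) :
    p ∈ G ∪ parallelOf G ∩ Ioo x y := by
  by_contra hp
  have hpv : IncompRel (· ≤ ·) p v := incompRel_of_not_comp hpv fun h => hp (h ▸ hv)
  have hxL := hB.mem_lowerOf_of_mem_Wminus hgood hx
  obtain ⟨g, hg⟩ := hB.1
  rcases hB.mem_or_lower_or_upper_or_parallel hgood p with hpG | hpL | hpU | hpC
  · exact hp (Or.inl hpG)
  · obtain ⟨hvC, hxv, -⟩ : v ∈ parallelOf G ∩ Ioo x y :=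
      hv.resolve_left fun hvG => hpv.1 (hpL v hvG).le
    have hpx : IncompRel (· ≤ ·) p x := by
      refine ⟨fun h => hpv.1 (h.trans hxv.le), fun h => ?_⟩
      rcases h.eq_or_lt with rfl | hlt
      exacts [hpv.1 hxv.le, not_lt_of_mem_Wminus hx hpL hlt]
    exact hN.elim (hpL g hg) (hxL g hg) hxv hpx hpv (hvC g hg).symm
  · rcases hu with huG | ⟨huC, -⟩
    · exact (hpU u huG).not_gt hpu
    · exact (huC g hg).2 ((hpU g hg).trans hpu).le
  · obtain ⟨huC, hxu, huy⟩ : u ∈ parallelOf G ∩ Ioo x y :=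
      hu.resolve_left fun huG => (hpC u huG).1 hpu.le
    have hpx : IncompRel (· ≤ ·) p x := by
      refine ⟨fun h => (hpC g hg).1 (h.trans (hxL g hg).le), fun h => ?_⟩
      rcases h.eq_or_lt with rfl | hlt
      exacts [(hpC g hg).1 (hxL g hg).le, hp (Or.inr ⟨hpC, hlt, hpu.trans huy⟩)]
    exact hN.elim hpu hxu (hxL g hg) hpx (hpC g hg) (huC g hg)

lemma IsBlock.mem_union_of_gt_of_not_comp (hN : NFree α) (hB : IsBlock G)
    (hgood : IsGoodIn univ G) (hy : y ∈ Wplus G) (hu : u ∈ G ∪ parallelOf G ∩ Ioo x y)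
    (hup : u < p) (hv : v ∈ G ∪ parallelOf G ∩ Ioo x y) (hpv : ¬ Comp p v) :
    p ∈ G ∪ parallelOf G ∩ Ioo x y := by
  have hS : ofDual ⁻¹' G ∪ parallelOf (ofDual ⁻¹' G) ∩ Ioo (toDual y) (toDual x) =
      ofDual ⁻¹' (G ∪ parallelOf G ∩ Ioo x y) := by
    rw [parallelOf_dual, Ioo_toDual, preimage_union, preimage_inter]
  have := hB.dual.mem_union_of_lt_of_not_comp hN.dual hgood.dual (x := toDual y) (y := toDual x)
    (p := toDual p) (u := toDual u) (v := toDual v) (by rwa [Wminus_dual]) (hS ▸ hu) hup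
    (hS ▸ hv) (mt comp_comm.1 hpv)
  rwa [hS] at this

lemma IsBlock.isGoodIn_union (hN : NFree α) (hB : IsBlock G) (hgood : IsGoodIn univ G)
    (hx : x ∈ Wminus G) (hy : y ∈ Wplus G) : IsGoodIn univ (G ∪ parallelOf G ∩ Ioo x y) := by
  rintro p - ⟨u, hu, hpu | hup⟩ ⟨v, hv, hpv⟩
  exacts [hB.mem_union_of_lt_of_not_comp hN hgood hx hu hpu hv hpv,
    hB.mem_union_of_gt_of_not_comp hN hgood hy hu hup hv hpv]

lemma GMPB.parallelOf_inter_Ioo_eq_empty (hN : NFree α) (hG : GMPB univ G) (hx : x ∈ Wminus G)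
    (hy : y ∈ Wplus G) : parallelOf G ∩ Ioo x y = ∅ := by
  have hB := hG.isBlock
  have hgood := hG.isGoodIn
  have hblock : IsBlock (G ∪ parallelOf G ∩ Ioo x y) := hB.union_of_subset_parallelOf
    inter_subset_left ((ordConnected_parallelOf hB hgood).inter ordConnected_Ioo)
  refine eq_empty_of_forall_notMem fun c hc => hG.2.2.2.2 ⟨_, subset_univ _, hblock,
    hB.isGoodIn_union hN hgood hx hy, _, ⟨c, hc⟩, rfl, fun g hg t ht => ?_⟩
  exact ⟨(ht.1 g hg).ne.symm, (ht.1 g hg).symm.not_comp⟩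

end Extension

lemma GMPB.witnesses_nonempty [WellFoundedLT α] [WellFoundedGT α] {G : Set α} (hN : NFree α)
    (hG : GMPB univ G) (hminus : (Wminus G).Nonempty) (hplus : (Wplus G).Nonempty) :
    (witnesses G).Nonempty := by
  obtain ⟨x, hx⟩ := hminus
  obtain ⟨y, hy⟩ := hplus
  have hB := hG.isBlock
  have hgood := hG.isGoodIn
  by_contra hW
  obtain ⟨s, hxs, hsC⟩ : ∃ s, x ⋖ s ∧ s ∈ parallelOf G := by
    simpa [hB.isLeftWitness_iff hgood, hx] using fun h => hW ⟨x, Or.inl h⟩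
  obtain ⟨t, hty, htC⟩ : ∃ t, t ⋖ y ∧ t ∈ parallelOf G := by
    simpa [hB.isRightWitness_iff hgood, hy] using fun h => hW ⟨y, Or.inr h⟩
  have hempty := hG.parallelOf_inter_Ioo_eq_empty hN hx hy
  obtain ⟨g, hg⟩ := hB.1
  have hxg := hB.mem_lowerOf_of_mem_Wminus hgood hx g hg
  have hgy := hB.mem_upperOf_of_mem_Wplus hgood hy g hg
  have hsy : ¬ s < y := fun h => hempty.subset ⟨hsC, hxs.lt, h⟩
  have hsy' : IncompRel (· ≤ ·) s y := by
    refine ⟨fun h => ?_, fun h => (hsC g hg).2 (hgy.le.trans h)⟩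
    rcases h.eq_or_lt with rfl | hlt
    exacts [(hsC g hg).2 hgy.le, hsy hlt]
  by_cases hts : t ≤ s
  · exact hN.elim hgy hty.lt (hts.lt_of_ne fun h => hsy (h ▸ hty.lt)) (htC g hg).symm
      (hsC g hg).symm hsy'.symm
  have htx : IncompRel (· ≤ ·) t x := by
    refine ⟨fun h => (htC g hg).1 (h.trans hxg.le), fun h => ?_⟩
    rcases h.eq_or_lt with rfl | hlt
    exacts [(htC g hg).1 hxg.le, hempty.subset ⟨htC, hlt, hty.lt⟩]
  exact hN.elim hty.lt (hxg.trans hgy) hxs.lt htx ⟨hts, fun h => hsy (h.trans_lt hty.lt)⟩ hsy'.symm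

/-- For a good maximal parallel block `G` of a finite N-free poset, the set of
witnesses of `G` equals `W⁻(G)`, or `W⁺(G)`, or `W⁻(G) ∪ W⁺(G)`. -/
theorem witnesses_eq_Wminus_or_Wplus {α : Type*} [Fintype α] [PartialOrder α]
    (hN : NFree α) (G : Set α) (hG : GMPB Set.univ G) :
    witnesses G = Wminus G ∨ witnesses G = Wplus G ∨ witnesses G = Wminus G ∪ Wplus G := by
  have hB := hG.isBlock
  have hgood := hG.isGoodIn
  have hW : witnesses G = {x | IsLeftWitness G x} ∪ {x | IsRightWitness G x} := rfl
  rcases hB.setOf_isLeftWitness_eq hN hgood with hL | hL <;>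
    rcases hB.setOf_isRightWitness_eq hN hgood with hR | hR <;>
    rw [hL, hR] at hW
  · rw [empty_union] at hW
    rcases (Wminus G).eq_empty_or_nonempty with hminus | hminus
    · exact Or.inl (hW.trans hminus.symm)
    rcases (Wplus G).eq_empty_or_nonempty with hplus | hplus
    · exact Or.inr (Or.inl (hW.trans hplus.symm))
    exact absurd hW (hG.witnesses_nonempty hN hminus hplus).ne_empty
  · exact Or.inr (Or.inl (hW.trans (empty_union _)))
  · exact Or.inl (hW.trans (union_empty _))
  · exact Or.inr (Or.inr hW)
end

section
/- In a finite N-free poset P, every element x ∈ P is a left witness of at most one good maximal parallel block of P, and similarly a right witness of at most one good maximal parallel block of P. -/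
variable {α : Type*} [PartialOrder α]

variable (G : Set α)

/-! A left witness `x` of `G` determines `minOf G` as its set of covers, so it suffices that two
good parallel blocks `G`, `G'` with the same minimal elements coincide. An element `g ∈ G \ G'`
lies above a common minimal element, so goodness of `G'` makes it comparable to all of `G'`,
and convexity of `G'` forces it above all of `G'`. Hence `G \ G'` and `G' \ G` cannot both be
nonempty, and if `G' ⊊ G` then every element of `G` is comparable to `c` or to `t`, for some
comparable `c ∈ G'` and `t ∈ G \ G'`, which no parallel decomposition of `G` allows. Right
witnesses are handled by order duality. -/

section
variable {β : Type*} [PartialOrder β] {X G G' : Set β}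

theorem Comp.symm {x y : β} (h : Comp x y) : Comp y x := Or.symm h

theorem minOf_subset : minOf G ⊆ G := fun _ hg => hg.1

theorem mem_minOf_iff_minimal {g : β} : g ∈ minOf G ↔ Minimal (· ∈ G) g := by
  rw [minimal_iff_forall_lt]
  exact and_congr_right fun _ => ⟨fun h _ hlt hg' => h _ hg' hlt, fun h _ hg' hlt => h hlt hg'⟩

theorem exists_mem_minOf_le [WellFoundedLT β] {g : β} (hg : g ∈ G) :
    ∃ m ∈ minOf G, m ≤ g := by
  obtain ⟨m, hmg, hm⟩ := exists_minimal_le_of_wellFoundedLT (· ∈ G) g hg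
  exact ⟨m, mem_minOf_iff_minimal.2 hm, hmg⟩

theorem lt_of_minOf_subset [WellFoundedLT β] (hB' : IsBlock G') (hgood' : IsGoodIn X G')
    (hGX : G ⊆ X) (hmin : minOf G ⊆ G') {g c : β} (hg : g ∈ G) (hgG' : g ∉ G') (hc : c ∈ G') :
    c < g := by
  obtain ⟨m, hm, hmg⟩ := exists_mem_minOf_le hg
  have hmG' : m ∈ G' := hmin hm
  have hmg : m < g := hmg.lt_of_ne (by rintro rfl; exact hgG' hmG')
  have hgc : Comp g c := by
    by_contra hgc
    exact hgG' (hgood' g (hGX hg) ⟨m, hmG', Or.inr hmg⟩ ⟨c, hc, hgc⟩)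
  rcases hgc with hgc | hcg
  · exact absurd (hB'.2 m hmG' c hc (hmg.trans hgc) g hmg.le hgc.le) hgG'
  · exact hcg

theorem IsParallel.exists_not_comp_of_comp (hG : IsParallel G) {a b : β} (ha : a ∈ G)
    (hb : b ∈ G) (hab : Comp a b) : ∃ p ∈ G, ¬ Comp p a ∧ ¬ Comp p b := by
  obtain ⟨P1, P2, ⟨q1, hq1⟩, ⟨q2, hq2⟩, rfl, hinc⟩ := hG
  rcases ha with ha | ha <;> rcases hb with hb | hb
  · exact ⟨q2, Or.inr hq2, fun h => (hinc a ha q2 hq2).2 h.symm,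
      fun h => (hinc b hb q2 hq2).2 h.symm⟩
  · exact absurd hab (hinc a ha b hb).2
  · exact absurd hab.symm (hinc b hb a ha).2
  · exact ⟨q1, Or.inl hq1, (hinc q1 hq1 a ha).2, (hinc q1 hq1 b hb).2⟩

theorem subset_of_minOf_eq [WellFoundedLT β] (hGX : G ⊆ X) (hB : IsBlock G)
    (hgood : IsGoodIn X G) (hpar : IsParallel G) (hG'X : G' ⊆ X) (hB' : IsBlock G')
    (hgood' : IsGoodIn X G') (hmin : minOf G = minOf G') : G ⊆ G' := by
  have above {g c} (hg : g ∈ G) (hgG' : g ∉ G') (hc : c ∈ G') : c < g :=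
    lt_of_minOf_subset hB' hgood' hGX (hmin.subset.trans minOf_subset) hg hgG' hc
  have above' {g c} (hg : g ∈ G') (hgG : g ∉ G) (hc : c ∈ G) : c < g :=
    lt_of_minOf_subset hB hgood hG'X (hmin.symm.subset.trans minOf_subset) hg hgG hc
  intro t htG
  by_contra htG'
  have hG'G : G' ⊆ G := fun s hs =>
    by_contra fun hsG => lt_asymm (above htG htG' hs) (above' hs hsG htG)
  obtain ⟨c, hc⟩ := hB'.1
  obtain ⟨p, hpG, hpc, hpt⟩ :=
    hpar.exists_not_comp_of_comp (hG'G hc) htG (Or.inl (above htG htG' hc))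
  by_cases hpG' : p ∈ G'
  · exact hpt (Or.inl (above htG htG' hpG'))
  · exact hpc (Or.inr (above hpG hpG' hc))

theorem eq_of_minOf_eq [WellFoundedLT β] (hGX : G ⊆ X) (hB : IsBlock G)
    (hgood : IsGoodIn X G) (hpar : IsParallel G) (hG'X : G' ⊆ X) (hB' : IsBlock G')
    (hgood' : IsGoodIn X G') (hpar' : IsParallel G') (hmin : minOf G = minOf G') : G = G' :=
  (subset_of_minOf_eq hGX hB hgood hpar hG'X hB' hgood' hmin).antisymm
    (subset_of_minOf_eq hG'X hB' hgood' hpar' hGX hB hgood hmin.symm)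

open OrderDual

theorem IsBlock.preimage_ofDual (h : IsBlock G) : IsBlock (ofDual ⁻¹' G) :=
  ⟨h.1.preimage ofDual.surjective, fun b hb b' hb' hlt p h1 h2 => h.2 b' hb' b hb hlt p h2 h1⟩

theorem IsGoodIn.preimage_ofDual (h : IsGoodIn X G) : IsGoodIn (ofDual ⁻¹' X) (ofDual ⁻¹' G) :=
  fun p hp ⟨g, hg, hpg⟩ ⟨g', hg', hpg'⟩ =>
    h (ofDual p) hp ⟨g, hg, Comp.symm hpg⟩ ⟨g', hg', fun h' => hpg' (Comp.symm h')⟩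

theorem IsParallel.preimage_ofDual (h : IsParallel G) : IsParallel (ofDual ⁻¹' G) := by
  obtain ⟨P1, P2, h1, h2, rfl, hinc⟩ := h
  exact ⟨ofDual ⁻¹' P1, ofDual ⁻¹' P2, h1.preimage ofDual.surjective,
    h2.preimage ofDual.surjective, rfl,
    fun x hx y hy => ⟨(hinc x hx y hy).1, fun h => (hinc x hx y hy).2 (Comp.symm h)⟩⟩

theorem minOf_preimage_ofDual : minOf (ofDual ⁻¹' G) = ofDual ⁻¹' maxOf G := rfl

theorem eq_of_maxOf_eq [WellFoundedGT β] (hGX : G ⊆ X) (hB : IsBlock G)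
    (hgood : IsGoodIn X G) (hpar : IsParallel G) (hG'X : G' ⊆ X) (hB' : IsBlock G')
    (hgood' : IsGoodIn X G') (hpar' : IsParallel G') (hmax : maxOf G = maxOf G') : G = G' :=
  Set.preimage_injective.2 ofDual.surjective <|
    eq_of_minOf_eq (X := ofDual ⁻¹' X) (Set.preimage_mono hGX) hB.preimage_ofDual
      hgood.preimage_ofDual hpar.preimage_ofDual (Set.preimage_mono hG'X) hB'.preimage_ofDual
      hgood'.preimage_ofDual hpar'.preimage_ofDual
      (by rw [minOf_preimage_ofDual, minOf_preimage_ofDual, hmax])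

end

theorem witness_unique_gmpb_general {α : Type*} [Fintype α] [PartialOrder α]
    (x : α) (G G' : Set α)
    (hG : GMPB Set.univ G) (hG' : GMPB Set.univ G') :
    (IsLeftWitness G x → IsLeftWitness G' x → G = G') ∧
    (IsRightWitness G x → IsRightWitness G' x → G = G') := by
  obtain ⟨hGX, hB, hgood, hpar, -⟩ := hG
  obtain ⟨hG'X, hB', hgood', hpar', -⟩ := hG'
  exact ⟨fun hx hx' => eq_of_minOf_eq hGX hB hgood hpar hG'X hB' hgood' hpar'
      (hx.2.2.symm.trans hx'.2.2),
    fun hx hx' => eq_of_maxOf_eq hGX hB hgood hpar hG'X hB' hgood' hpar'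
      (hx.2.2.symm.trans hx'.2.2)⟩

/-- In a finite N-free poset, every element is a left witness of at most one good
maximal parallel block, and a right witness of at most one good maximal parallel
block. -/
theorem witness_unique_gmpb {α : Type*} [Fintype α] [PartialOrder α]
    (hN : NFree α) (x : α) (G G' : Set α)
    (hG : GMPB Set.univ G) (hG' : GMPB Set.univ G') :
    (IsLeftWitness G x → IsLeftWitness G' x → G = G') ∧
    (IsRightWitness G x → IsRightWitness G' x → G = G') :=
  witness_unique_gmpb_general x G G' hG hG'
end
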